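/- Iterated greedy matching extracts a maximum set of pairwise non-overlapping occurrences: let t be a trace and q a simple pattern of length p. Repeatedly apply greedy matching (skip-till-next-match) to the suffix of t strictly after the last event of the previous match, collecting occurrences Occ_1, Occ_2, ..., Occ_r until no further match exists. Then Occ_1, ..., Occ_r are pairwise non-overlapping in time, and r equals the maximum cardinality of any set of pairwise non-overlapping occurrences of q in t. -/

import Mathlib

structure Event where
  type : ℕ
  ts : ℤ
deriving DecidableEq

/-- Greedy (skip-till-next-match) matching, returning the match together with the suffix
of the trace strictly after the last matched event. -/
def greedyMatch' : List Event → List ℕ → Option (List Event × List Event)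
  | t, [] => some ([], t)
  | [], _ :: _ => none
  | ev :: evs, a :: as =>
    if ev.type = a then (greedyMatch' evs as).map (fun p => (ev :: p.1, p.2))
    else greedyMatch' evs (a :: as)

/-- Iterated greedy matching (with enough fuel): repeatedly apply greedy matching to the
suffix strictly after the last event of the previous match. -/
def iterGreedyAux (q : List ℕ) : ℕ → List Event → List (List Event)
  | 0, _ => []
  | fuel + 1, t =>
    match greedyMatch' t q with
    | none => []
    | some (ms, rest) => ms :: iterGreedyAux q fuel rest

def iterGreedy (q : List ℕ) (t : List Event) : List (List Event) :=
  iterGreedyAux q (t.length + 1) t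

/-- Two occurrences are non-overlapping in time iff the last event of one has smaller
timestamp than the first event of the other. -/
def NonOverlapL (O1 O2 : List Event) : Prop :=
  ∃ h1 : O1 ≠ [], ∃ h2 : O2 ≠ [],
    (O1.getLast h1).ts < (O2.head h2).ts ∨ (O2.getLast h2).ts < (O1.head h1).ts

/-!
Greedy matching consumes as short a prefix as possible: whenever `t` contains an occurrence
`O` of `q`, greedy matching succeeds and everything in `t` lying after `O` survives in the
remaining suffix. Each greedy occurrence lies in the prefix it consumed, and every later one in
the suffix, so they are pairwise non-overlapping. Conversely, among pairwise non-overlapping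
occurrences `S` one, `O₀`, precedes all others; after the first greedy match the others still
lie in the suffix, and induction on the length of the trace gives `|S| ≤ r`.
-/

theorem List.exists_perm_cons_forall_rel_of_pairwise {α : Type*} {R : α → α → Prop}
    {S : List α} (hS : S ≠ []) (htot : S.Pairwise fun a b => R a b ∨ R b a)
    (htrans : ∀ a ∈ S, ∀ b ∈ S, ∀ c ∈ S, R a b → R b c → R a c) :
    ∃ a E, S.Perm (a :: E) ∧ ∀ b ∈ E, R a b := by
  induction S with
  | nil => exact absurd rfl hS
  | cons a S ih =>
    rcases eq_or_ne S [] with rfl | hS'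
    · exact ⟨a, [], List.Perm.refl _, by simp⟩
    obtain ⟨hhead, htail⟩ := List.pairwise_cons.mp htot
    obtain ⟨b, E, hperm, hmin⟩ := ih hS' htail fun x hx y hy z hz =>
      htrans x (.tail _ hx) y (.tail _ hy) z (.tail _ hz)
    have hb : b ∈ S := hperm.symm.subset (.head _)
    rcases hhead b hb with hab | hba
    · refine ⟨a, S, List.Perm.refl _, fun c hc => ?_⟩
      rcases List.mem_cons.mp (hperm.subset hc) with rfl | hcE
      · exact hab
      · exact htrans a (.head _) b (.tail _ hb) c (.tail _ hc) hab (hmin c hcE)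
    · refine ⟨b, a :: E, (hperm.cons a).trans (.swap b a E), fun c hc => ?_⟩
      rcases List.mem_cons.mp hc with rfl | hcE
      · exact hba
      · exact hmin c hcE

def Precedes (A B : List Event) : Prop :=
  ∀ x ∈ A, ∀ y ∈ B, x.ts < y.ts

theorem Precedes.trans {A B C : List Event} (hAB : Precedes A B) (hBC : Precedes B C)
    (hB : B ≠ []) : Precedes A C := by
  obtain ⟨b, hb⟩ := List.exists_mem_of_ne_nil B hB
  exact fun x hx z hz => (hAB x hx b hb).trans (hBC b hb z hz)

theorem Precedes.nonOverlapL {A B : List Event} (h : Precedes A B) (hA : A ≠ []) (hB : B ≠ []) :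
    NonOverlapL A B :=
  ⟨hA, hB, .inl (h _ (List.getLast_mem hA) _ (List.head_mem hB))⟩

theorem NonOverlapL.symm {A B : List Event} (h : NonOverlapL A B) : NonOverlapL B A :=
  let ⟨hA, hB, h⟩ := h
  ⟨hB, hA, h.symm⟩

theorem NonOverlapL.precedes_or_precedes {A B : List Event} (h : NonOverlapL A B)
    (hA : A.Pairwise fun x y => x.ts < y.ts) (hB : B.Pairwise fun x y => x.ts < y.ts) :
    Precedes A B ∨ Precedes B A := by
  have le_getLast {L : List Event} (hL : L.Pairwise fun x y => x.ts < y.ts) {x} (hx : x ∈ L) hne :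
      x.ts ≤ (L.getLast hne).ts :=
    (hL.imp le_of_lt).rel_getLast_of_rel_getLast_getLast hx le_rfl
  have head_le {L : List Event} (hL : L.Pairwise fun x y => x.ts < y.ts) {x} (hx : x ∈ L) hne :
      (L.head hne).ts ≤ x.ts :=
    (hL.imp le_of_lt).rel_head_of_rel_head_head hx le_rfl
  obtain ⟨hA', hB', hAB | hBA⟩ := h
  · exact .inl fun x hx y hy => (le_getLast hA hx hA').trans_lt (hAB.trans_le (head_le hB hy hB'))
  · exact .inr fun y hy x hx => (le_getLast hB hy hB').trans_lt (hBA.trans_le (head_le hA hx hA'))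

theorem greedyMatch'_spec {t : List Event} {q : List ℕ} {ms rest : List Event}
    (h : greedyMatch' t q = some (ms, rest)) :
    ∃ pre, t = pre ++ rest ∧ ms.Sublist pre ∧ ms.map Event.type = q := by
  induction t generalizing q ms with
  | nil =>
    cases q with
    | nil => cases h; exact ⟨[], rfl, .slnil, rfl⟩
    | cons a q => cases h
  | cons ev t ih =>
    cases q with
    | nil => cases h; exact ⟨[], rfl, .slnil, rfl⟩
    | cons a q =>
      by_cases hty : ev.type = a
      · simp only [greedyMatch', hty, if_true, Option.map_eq_some_iff, Prod.exists,
          Prod.mk.injEq] at h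
        obtain ⟨ms', rest', hg, rfl, rfl⟩ := h
        obtain ⟨pre, rfl, hsub, hmap⟩ := ih hg
        exact ⟨ev :: pre, rfl, hsub.cons_cons ev, by simp [hty, hmap]⟩
      · simp only [greedyMatch', hty, if_false] at h
        obtain ⟨pre, rfl, hsub, hmap⟩ := ih h
        exact ⟨ev :: pre, rfl, hsub.cons ev, hmap⟩

theorem greedyMatch'_length_lt {t : List Event} {q : List ℕ} {ms rest : List Event}
    (hq : q ≠ []) (h : greedyMatch' t q = some (ms, rest)) : rest.length < t.length := by
  obtain ⟨pre, rfl, hsub, hmap⟩ := greedyMatch'_spec h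
  have hpre : pre ≠ [] := by
    rintro rfl
    exact hq (by simpa [List.sublist_nil.mp hsub] using hmap.symm)
  simpa using List.length_pos_iff.mpr hpre

theorem greedyMatch'_eq_some_of_sublist {t : List Event} (ht : t.Pairwise fun x y => x.ts < y.ts)
    {O : List Event} (hO : O.Sublist t) :
    ∃ ms rest, greedyMatch' t (O.map Event.type) = some (ms, rest) ∧
      ∀ B, B.Sublist t → Precedes O B → B.Sublist rest := by
  induction t generalizing O with
  | nil =>
    obtain rfl := List.sublist_nil.mp hO
    exact ⟨[], [], rfl, fun B hB _ => hB⟩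
  | cons ev t ih =>
    obtain ⟨hev, ht⟩ := List.pairwise_cons.mp ht
    cases O with
    | nil => exact ⟨[], ev :: t, rfl, fun B hB _ => hB⟩
    | cons o O =>
      have hev_le : ev.ts ≤ o.ts := by
        rcases List.sublist_cons_iff.mp hO with hO | ⟨r, h, -⟩
        · exact (hev o (hO.subset (.head _))).le
        · rw [(List.cons.inj h).1]
      have drop_ev : ∀ B, B.Sublist (ev :: t) → Precedes (o :: O) B → B.Sublist t := by
        intro B hB hOB
        rcases List.sublist_cons_iff.mp hB with hB | ⟨r, rfl, -⟩
        · exact hB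
        · exact absurd (hOB o (.head _) ev (.head _)) hev_le.not_gt
      by_cases hty : ev.type = o.type
      · have hO' : O.Sublist t := by
          rcases List.sublist_cons_iff.mp hO with hO | ⟨r, h, hr⟩
          · exact (List.sublist_cons_self o O).trans hO
          · exact (List.cons.inj h).2 ▸ hr
        obtain ⟨ms, rest, hg, hrest⟩ := ih ht hO'
        refine ⟨ev :: ms, rest, by simp [greedyMatch', hty, hg], fun B hB hOB => ?_⟩
        exact hrest B (drop_ev B hB hOB) fun x hx => hOB x (.tail _ hx)
      · have hO' : (o :: O).Sublist t := by
          rcases List.sublist_cons_iff.mp hO with hO | ⟨r, h, -⟩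
          · exact hO
          · exact absurd (congrArg Event.type (List.cons.inj h).1) (Ne.symm hty)
        obtain ⟨ms, rest, hg, hrest⟩ := ih ht hO'
        refine ⟨ms, rest, ?_, fun B hB hOB => hrest B (drop_ev B hB hOB) hOB⟩
        simpa [greedyMatch', hty] using hg

theorem mem_iterGreedyAux {q : List ℕ} {fuel : ℕ} {t O : List Event}
    (hO : O ∈ iterGreedyAux q fuel t) : O.Sublist t ∧ O.map Event.type = q := by
  induction fuel generalizing t with
  | zero => simp [iterGreedyAux] at hO
  | succ fuel ih =>
    rw [iterGreedyAux] at hO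
    split at hO
    · simp at hO
    · rename_i ms rest hg
      obtain ⟨pre, rfl, hsub, hmap⟩ := greedyMatch'_spec hg
      rcases List.mem_cons.mp hO with rfl | hO
      · exact ⟨hsub.trans (List.sublist_append_left _ _), hmap⟩
      · obtain ⟨hOs, hOq⟩ := ih hO
        exact ⟨hOs.trans (List.sublist_append_right _ _), hOq⟩

theorem pairwise_nonOverlapL_iterGreedyAux {q : List ℕ} (hq : q ≠ []) (fuel : ℕ)
    {t : List Event} (ht : t.Pairwise fun x y => x.ts < y.ts) :
    (iterGreedyAux q fuel t).Pairwise NonOverlapL := by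
  have ne_nil {O : List Event} (hO : O.map Event.type = q) : O ≠ [] := by
    rintro rfl; exact hq hO.symm
  induction fuel generalizing t with
  | zero => simp [iterGreedyAux]
  | succ fuel ih =>
    rw [iterGreedyAux]
    split
    · exact .nil
    · rename_i ms rest hg
      obtain ⟨pre, rfl, hsub, hmap⟩ := greedyMatch'_spec hg
      obtain ⟨-, hrest, hpre_rest⟩ := List.pairwise_append.mp ht
      refine .cons (fun O hO => ?_) (ih hrest)
      obtain ⟨hOs, hOq⟩ := mem_iterGreedyAux hO
      exact Precedes.nonOverlapL (fun x hx y hy => hpre_rest x (hsub.subset hx) y (hOs.subset hy))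
        (ne_nil hmap) (ne_nil hOq)

theorem iterGreedyAux_congr_fuel {q : List ℕ} (hq : q ≠ []) {f₁ f₂ : ℕ} {t : List Event}
    (h₁ : t.length < f₁) (h₂ : t.length < f₂) :
    iterGreedyAux q f₁ t = iterGreedyAux q f₂ t := by
  induction f₁ generalizing t f₂ with
  | zero => omega
  | succ f₁ ih =>
    obtain ⟨f₂, rfl⟩ := Nat.exists_eq_add_one_of_ne_zero (by omega : f₂ ≠ 0)
    rw [iterGreedyAux, iterGreedyAux]
    split
    · rfl
    · rename_i hg
      have := greedyMatch'_length_lt hq hg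
      exact congrArg _ (ih (by omega) (by omega))

theorem iterGreedy_of_eq_some {q : List ℕ} (hq : q ≠ []) {t ms rest : List Event}
    (h : greedyMatch' t q = some (ms, rest)) : iterGreedy q t = ms :: iterGreedy q rest := by
  rw [iterGreedy, iterGreedyAux, h]
  simp only [List.cons.injEq, true_and]
  exact iterGreedyAux_congr_fuel hq (greedyMatch'_length_lt hq h) (by omega)

theorem length_le_length_iterGreedy {q : List ℕ} (hq : q ≠ []) {t : List Event}
    (ht : t.Pairwise fun x y => x.ts < y.ts) {S : List (List Event)} (hS : S.Pairwise NonOverlapL)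
    (hocc : ∀ O ∈ S, O.Sublist t ∧ O.map Event.type = q) :
    S.length ≤ (iterGreedy q t).length := by
  rcases eq_or_ne S [] with rfl | hSne
  · simp
  have ne_nil : ∀ O ∈ S, O ≠ [] := by
    rintro O hO rfl; exact hq (hocc [] hO).2.symm
  have sorted : ∀ O ∈ S, O.Pairwise fun x y => x.ts < y.ts :=
    fun O hO => ht.sublist (hocc O hO).1
  obtain ⟨O₀, E, hperm, hfirst⟩ := List.exists_perm_cons_forall_rel_of_pairwise hSne
    (hS.imp_of_mem fun hA hB h => h.precedes_or_precedes (sorted _ hA) (sorted _ hB))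
    fun A _ B hB C _ hAB hBC => hAB.trans hBC (ne_nil B hB)
  have hO₀ := hocc O₀ (hperm.symm.subset (.head _))
  obtain ⟨ms, rest, hg, hrest⟩ := greedyMatch'_eq_some_of_sublist ht hO₀.1
  rw [hO₀.2] at hg
  have hE : ∀ O ∈ E, O.Sublist rest ∧ O.map Event.type = q := fun O hO =>
    have hOt := hocc O (hperm.symm.subset (.tail _ hO))
    ⟨hrest O hOt.1 (hfirst O hO), hOt.2⟩
  have hrest_sorted : rest.Pairwise fun x y => x.ts < y.ts := by
    obtain ⟨pre, rfl, -⟩ := greedyMatch'_spec hg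
    exact (List.pairwise_append.mp ht).2.1
  have hshorter := greedyMatch'_length_lt hq hg
  have ih := length_le_length_iterGreedy hq hrest_sorted
    ((hperm.pairwise_iff fun h => h.symm).mp hS).of_cons hE
  rw [hperm.length_eq, iterGreedy_of_eq_some hq hg]
  simpa using ih
termination_by t.length

/-- The occurrences extracted by iterated greedy matching are pairwise
non-overlapping occurrences of `q` in `t`, and their number equals the maximum
cardinality of any set of pairwise non-overlapping occurrences of `q` in `t`. -/
theorem stmt10 (t : List Event) (ht : t.Chain' (fun e1 e2 => e1.ts < e2.ts))
    (q : List ℕ) (hq : 1 ≤ q.length) :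
    (iterGreedy q t).Pairwise NonOverlapL ∧
    (∀ O ∈ iterGreedy q t, O.Sublist t ∧ O.map Event.type = q) ∧
    (∀ S : List (List Event), S.Pairwise NonOverlapL →
      (∀ O ∈ S, O.Sublist t ∧ O.map Event.type = q) →
      S.length ≤ (iterGreedy q t).length) := by
  have hsorted : t.Pairwise fun x y => x.ts < y.ts :=
    List.pairwise_map.mp ((List.isChain_map Event.ts).mpr ht).pairwise
  have hq' : q ≠ [] := List.ne_nil_of_length_pos hq
  exact ⟨pairwise_nonOverlapL_iterGreedyAux hq' _ hsorted, fun O => mem_iterGreedyAux,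
    fun S hS hocc => length_le_length_iterGreedy hq' hsorted hS hocc⟩
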